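/- arXiv:1301.3239 — 4 statements merged into one kernel-verified Lean document; each statement's English description precedes it below -/
import Mathlib

section
/- Let A be a non-unital Banach algebra and let A# = A ⊕ ℂ be its unitization (with product (a,α)(b,β) = (ab + βa + αb, αβ) and ℓ¹-norm). Then A# is approximately cyclic amenable if and only if A is approximately cyclic amenable. -/
open Filter Topology

noncomputable section

universe u v

variable {A : Type u} [NonUnitalNormedRing A] [NormedSpace ℂ A]
  [IsScalarTower ℂ A A] [SMulCommClass ℂ A A]

/-- The left module action of `A` on its dual `A*`: `(a · f) b = f (b * a)`. -/
def lAct (a : A) (f : A →L[ℂ] ℂ) : A →L[ℂ] ℂ :=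
  f.comp ((ContinuousLinearMap.mul ℂ A).flip a)

/-- The right module action of `A` on its dual `A*`: `(f · a) b = f (a * b)`. -/
def rAct (f : A →L[ℂ] ℂ) (a : A) : A →L[ℂ] ℂ :=
  f.comp (ContinuousLinearMap.mul ℂ A a)

/-- A bounded linear `D : A → A*` is a derivation if `D (a * b) = D a · b + a · D b`. -/
def IsDerivation (D : A →L[ℂ] (A →L[ℂ] ℂ)) : Prop :=
  ∀ a b : A, D (a * b) = rAct (D a) b + lAct a (D b)

/-- A derivation `D : A → A*` is cyclic if `⟨D a, b⟩ + ⟨D b, a⟩ = 0` for all `a, b`. -/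
def IsCyclicDeriv (D : A →L[ℂ] (A →L[ℂ] ℂ)) : Prop :=
  ∀ a b : A, D a b + D b a = 0

/-- `D : A → A*` is approximately inner if there is a net `(f i)` in `A*` with
`D a = lim_i (a · f i - f i · a)` in norm, for every `a ∈ A`. -/
def IsApproxInner {A : Type u} [NonUnitalNormedRing A] [NormedSpace ℂ A]
    [IsScalarTower ℂ A A] [SMulCommClass ℂ A A] (D : A →L[ℂ] (A →L[ℂ] ℂ)) : Prop :=
  ∃ (ι : Type u) (l : Filter ι) (f : ι → (A →L[ℂ] ℂ)), l.NeBot ∧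
    ∀ a : A, Tendsto (fun i => lAct a (f i) - rAct (f i) a) l (𝓝 (D a))

/-- `D : A → A*` is inner if `D a = a · f - f · a` for some fixed `f ∈ A*`. -/
def IsInner (D : A →L[ℂ] (A →L[ℂ] ℂ)) : Prop :=
  ∃ f : A →L[ℂ] ℂ, ∀ a : A, D a = lAct a f - rAct f a

/-- A Banach algebra is approximately cyclic amenable if every cyclic bounded
derivation `D : A → A*` is approximately inner. -/
def ApproxCyclicAmenable (A : Type u) [NonUnitalNormedRing A] [NormedSpace ℂ A]
    [IsScalarTower ℂ A A] [SMulCommClass ℂ A A] : Prop :=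
  ∀ D : A →L[ℂ] (A →L[ℂ] ℂ), IsDerivation D → IsCyclicDeriv D → IsApproxInner D

/-- A Banach algebra is cyclic amenable if every cyclic bounded derivation
`D : A → A*` is inner. -/
def CyclicAmenable (A : Type u) [NonUnitalNormedRing A] [NormedSpace ℂ A]
    [IsScalarTower ℂ A A] [SMulCommClass ℂ A A] : Prop :=
  ∀ D : A →L[ℂ] (A →L[ℂ] ℂ), IsDerivation D → IsCyclicDeriv D → IsInner D

/-!
A cyclic derivation `D : A → A*` lifts to `A♯` by `⟨D♯ x, y⟩ = ⟨D x_A, y_A⟩`, where `x_A` is the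
`A`-component; the Leibniz rule for the lift holds exactly because `D` is cyclic. Conversely a
cyclic derivation of `A♯` satisfies `D 1 = 0`, hence `⟨D x, 1⟩ = -⟨D 1, x⟩ = 0`, so it is the
lift of its restriction to `A`. Restriction `A♯* → A*` and extension by zero `A* → A♯*` are
bounded and turn commutators into commutators, so they carry approximating nets across.
-/

@[simp] lemma lAct_apply (a b : A) (f : A →L[ℂ] ℂ) : lAct a f b = f (b * a) := rfl

@[simp] lemma rAct_apply (a b : A) (f : A →L[ℂ] ℂ) : rAct f a b = f (a * b) := rfl

lemma IsDerivation.map_one {B : Type u} [NormedRing B] [NormedAlgebra ℂ B]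
    {D : B →L[ℂ] (B →L[ℂ] ℂ)} (hD : IsDerivation D) : D 1 = 0 := by
  have h := hD 1 1
  have hr : rAct (D 1) 1 = D 1 := by ext; simp
  have hl : lAct 1 (D 1) = D 1 := by ext; simp
  rw [one_mul, hr, hl] at h
  simpa using h

lemma IsApproxInner.of_intertwining {B : Type u} [NonUnitalNormedRing B] [NormedSpace ℂ B]
    [IsScalarTower ℂ B B] [SMulCommClass ℂ B B]
    {D : A →L[ℂ] (A →L[ℂ] ℂ)} {D' : B →L[ℂ] (B →L[ℂ] ℂ)} (hD' : IsApproxInner D')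
    (φ : A → B) (T : (B →L[ℂ] ℂ) →L[ℂ] (A →L[ℂ] ℂ))
    (hT : ∀ a F, T (lAct (φ a) F - rAct F (φ a)) = lAct a (T F) - rAct (T F) a)
    (hTD : ∀ a, T (D' (φ a)) = D a) :
    IsApproxInner D := by
  obtain ⟨ι, l, F, hl, hF⟩ := hD'
  refine ⟨ι, l, fun i => T (F i), hl, fun a => ?_⟩
  simpa only [Function.comp_def, hT, hTD] using (T.continuous.tendsto _).comp (hF (φ a))

section Unitization

local notation "A♯" => WithLp 1 (Unitization ℂ A)

namespace WithLp

def unitizationSndCLM : A♯ →L[ℂ] A :=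
  ((Unitization.sndHom ℂ ℂ A).comp
    (WithLp.linearEquiv 1 ℂ (Unitization ℂ A)).toLinearMap).mkContinuous 1 fun x => by
      rw [one_mul, WithLp.unitization_norm_def]
      exact le_add_of_nonneg_left (norm_nonneg _)

def unitizationInrCLM : A →L[ℂ] A♯ :=
  ((WithLp.linearEquiv 1 ℂ (Unitization ℂ A)).symm.toLinearMap.comp
    (Unitization.inrHom ℂ ℂ A)).mkContinuous 1 fun a => by
      simpa using (WithLp.unitization_norm_inr (𝕜 := ℂ) a).le

@[simp] lemma unitizationSndCLM_apply (x : A♯) : unitizationSndCLM x = (ofLp x).snd := rfl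

@[simp] lemma ofLp_unitizationInrCLM (a : A) : ofLp (unitizationInrCLM a) = (a : Unitization ℂ A) :=
  rfl

lemma unitizationInrCLM_mul (a b : A) :
    unitizationInrCLM (a * b) = unitizationInrCLM a * unitizationInrCLM b :=
  (WithLp.equiv 1 (Unitization ℂ A)).injective (Unitization.inr_mul ℂ a b)

lemma unitization_eq_inrCLM_add_smul_one (x : A♯) :
    x = unitizationInrCLM (unitizationSndCLM x) + (ofLp x).fst • 1 := by
  apply (WithLp.equiv 1 (Unitization ℂ A)).injective
  ext <;> simp [show ofLp (1 : A♯) = 1 from rfl]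

def unitizationExtendDual : (A →L[ℂ] ℂ) →L[ℂ] (A♯ →L[ℂ] ℂ) :=
  (ContinuousLinearMap.compL ℂ A♯ A ℂ).flip unitizationSndCLM

def unitizationRestrictDual : (A♯ →L[ℂ] ℂ) →L[ℂ] (A →L[ℂ] ℂ) :=
  (ContinuousLinearMap.compL ℂ A A♯ ℂ).flip unitizationInrCLM

@[simp] lemma unitizationExtendDual_apply (f : A →L[ℂ] ℂ) (x : A♯) :
    unitizationExtendDual f x = f (ofLp x).snd := rfl

@[simp] lemma unitizationRestrictDual_apply (F : A♯ →L[ℂ] ℂ) (a : A) :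
    unitizationRestrictDual F a = F (unitizationInrCLM a) := rfl

lemma unitizationExtendDual_commutator (x : A♯) (f : A →L[ℂ] ℂ) :
    unitizationExtendDual (lAct (unitizationSndCLM x) f - rAct f (unitizationSndCLM x))
      = lAct x (unitizationExtendDual f) - rAct (unitizationExtendDual f) x := by
  ext y
  simp only [sub_apply, lAct_apply, rAct_apply, unitizationExtendDual_apply,
    unitizationSndCLM_apply, unitization_mul, Unitization.snd_mul, map_add, map_smul]
  ring

lemma unitizationRestrictDual_commutator (a : A) (F : A♯ →L[ℂ] ℂ) :
    unitizationRestrictDual (lAct (unitizationInrCLM a) F - rAct F (unitizationInrCLM a))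
      = lAct a (unitizationRestrictDual F) - rAct (unitizationRestrictDual F) a := by
  ext b
  simp [← unitizationInrCLM_mul]

end WithLp

open WithLp

def unitizationLift (D : A →L[ℂ] (A →L[ℂ] ℂ)) : A♯ →L[ℂ] (A♯ →L[ℂ] ℂ) :=
  unitizationExtendDual ∘L D ∘L unitizationSndCLM

def unitizationRestrict (D : A♯ →L[ℂ] (A♯ →L[ℂ] ℂ)) : A →L[ℂ] (A →L[ℂ] ℂ) :=
  unitizationRestrictDual ∘L D ∘L unitizationInrCLM

@[simp] lemma unitizationLift_apply (D : A →L[ℂ] (A →L[ℂ] ℂ)) (x y : A♯) :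
    unitizationLift D x y = D (ofLp x).snd (ofLp y).snd := rfl

@[simp] lemma unitizationRestrict_apply (D : A♯ →L[ℂ] (A♯ →L[ℂ] ℂ)) (a b : A) :
    unitizationRestrict D a b = D (unitizationInrCLM a) (unitizationInrCLM b) := rfl

lemma unitizationRestrict_unitizationLift (D : A →L[ℂ] (A →L[ℂ] ℂ)) :
    unitizationRestrict (unitizationLift D) = D := by
  ext a b
  simp

/-- The Leibniz defect of the lift at `z` is `(ofLp z).fst * (⟨D a, b⟩ + ⟨D b, a⟩)`. -/
lemma IsDerivation.unitizationLift {D : A →L[ℂ] (A →L[ℂ] ℂ)} (hD : IsDerivation D)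
    (hC : IsCyclicDeriv D) : IsDerivation (unitizationLift D) := by
  intro x y
  ext z
  have hcyc := hC (ofLp x).snd (ofLp y).snd
  simp only [unitizationLift_apply, add_apply, lAct_apply, rAct_apply,
    unitization_mul, Unitization.snd_mul, map_add, map_smul, hD (ofLp x).snd (ofLp y).snd,
    smul_apply, smul_eq_mul]
  linear_combination -(ofLp z).fst * hcyc

lemma IsCyclicDeriv.unitizationLift {D : A →L[ℂ] (A →L[ℂ] ℂ)} (hC : IsCyclicDeriv D) :
    IsCyclicDeriv (unitizationLift D) :=
  fun x y => hC (ofLp x).snd (ofLp y).snd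

lemma IsDerivation.unitizationRestrict {D : A♯ →L[ℂ] (A♯ →L[ℂ] ℂ)} (hD : IsDerivation D) :
    IsDerivation (unitizationRestrict D) := by
  intro a b
  ext c
  simp [unitizationInrCLM_mul, hD (unitizationInrCLM a) (unitizationInrCLM b)]

lemma IsCyclicDeriv.unitizationRestrict {D : A♯ →L[ℂ] (A♯ →L[ℂ] ℂ)} (hC : IsCyclicDeriv D) :
    IsCyclicDeriv (unitizationRestrict D) :=
  fun a b => hC (unitizationInrCLM a) (unitizationInrCLM b)

lemma unitizationLift_unitizationRestrict {D : A♯ →L[ℂ] (A♯ →L[ℂ] ℂ)} (hD : IsDerivation D)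
    (hC : IsCyclicDeriv D) : unitizationLift (unitizationRestrict D) = D := by
  have hD₁ : D 1 = 0 := hD.map_one
  have hD_one : ∀ x, D x 1 = 0 := fun x => by simpa [hD₁] using hC x 1
  ext x y
  conv_rhs => rw [unitization_eq_inrCLM_add_smul_one x, unitization_eq_inrCLM_add_smul_one y]
  simp [hD₁, hD_one]

end Unitization

theorem unitization_approxCyclicAmenable_iff_general
    {A : Type u} [NonUnitalNormedRing A] [NormedSpace ℂ A]
    [IsScalarTower ℂ A A] [SMulCommClass ℂ A A] :
    ApproxCyclicAmenable (WithLp 1 (Unitization ℂ A)) ↔ ApproxCyclicAmenable A := by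
  constructor
  · intro h D hD hC
    exact (h _ (hD.unitizationLift hC) hC.unitizationLift).of_intertwining
      WithLp.unitizationInrCLM WithLp.unitizationRestrictDual
      WithLp.unitizationRestrictDual_commutator
      (DFunLike.congr_fun (unitizationRestrict_unitizationLift D))
  · intro h D hD hC
    exact (h _ hD.unitizationRestrict hC.unitizationRestrict).of_intertwining
      WithLp.unitizationSndCLM WithLp.unitizationExtendDual
      WithLp.unitizationExtendDual_commutator
      (DFunLike.congr_fun (unitizationLift_unitizationRestrict hD hC))

/-- For a non-unital Banach algebra `A`, the unitization
`A♯ = A ⊕ ℂ` (with `ℓ¹`-norm) is approximately cyclic amenable if and only if `A` is. -/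
theorem unitization_approxCyclicAmenable_iff
    {A : Type u} [NonUnitalNormedRing A] [NormedSpace ℂ A]
    [IsScalarTower ℂ A A] [SMulCommClass ℂ A A] [CompleteSpace A]
    (hA : ¬ ∃ e : A, ∀ a : A, e * a = a ∧ a * e = a) :
    ApproxCyclicAmenable (WithLp 1 (Unitization ℂ A)) ↔ ApproxCyclicAmenable A :=
  unitization_approxCyclicAmenable_iff_general
end
end

section
/- Let A and B be Banach algebras. Suppose A is commutative and A² is dense in A (where A² = {ab : a,b ∈ A}). If A and B are approximately cyclic amenable, then the ℓ¹-direct sum A ⊕ B (with coordinatewise operations and norm ‖(a,b)‖ = ‖a‖ + ‖b‖) is approximately cyclic amenable. -/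
open Filter Topology

noncomputable section

universe u v

variable {A : Type u} [NonUnitalNormedRing A] [NormedSpace ℂ A]
  [IsScalarTower ℂ A A] [SMulCommClass ℂ A A]

set_option linter.unusedSectionVars false

section L1Prod

variable {B : Type v} [NonUnitalNormedRing B] [NormedSpace ℂ B]
  [IsScalarTower ℂ B B] [SMulCommClass ℂ B B]

/-- Coordinatewise ring structure on the `ℓ¹`-direct sum `A ⊕ B`. -/
instance : NonUnitalRing (WithLp 1 (A × B)) := (WithLp.equiv 1 (A × B)).nonUnitalRing

lemma l1prod_norm_def (x : WithLp 1 (A × B)) :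
    ‖x‖ = ‖(WithLp.equiv 1 (A × B) x).1‖ + ‖(WithLp.equiv 1 (A × B) x).2‖ := by
  rw [WithLp.prod_norm_eq_add (by simp : 0 < (1 : ENNReal).toReal)]
  simp

/-- The `ℓ¹`-direct sum of two Banach algebras, with the coordinatewise product and the
norm `‖(a, b)‖ = ‖a‖ + ‖b‖`, is again a Banach algebra. -/
instance : NonUnitalNormedRing (WithLp 1 (A × B)) where
  __ := (inferInstance : NonUnitalRing (WithLp 1 (A × B)))
  __ := (inferInstance : NormedAddCommGroup (WithLp 1 (A × B)))
  norm_mul_le x y := by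
    rw [l1prod_norm_def, l1prod_norm_def x, l1prod_norm_def y]
    have hx1 : (WithLp.equiv 1 (A × B) (x * y)).1
        = (WithLp.equiv 1 (A × B) x).1 * (WithLp.equiv 1 (A × B) y).1 := rfl
    have hx2 : (WithLp.equiv 1 (A × B) (x * y)).2
        = (WithLp.equiv 1 (A × B) x).2 * (WithLp.equiv 1 (A × B) y).2 := rfl
    rw [hx1, hx2]
    set a1 := (WithLp.equiv 1 (A × B) x).1
    set b1 := (WithLp.equiv 1 (A × B) x).2
    set a2 := (WithLp.equiv 1 (A × B) y).1
    set b2 := (WithLp.equiv 1 (A × B) y).2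
    have h1 : ‖a1 * a2‖ ≤ ‖a1‖ * ‖a2‖ := norm_mul_le _ _
    have h2 : ‖b1 * b2‖ ≤ ‖b1‖ * ‖b2‖ := norm_mul_le _ _
    nlinarith [norm_nonneg a1, norm_nonneg a2, norm_nonneg b1, norm_nonneg b2]

instance : IsScalarTower ℂ (WithLp 1 (A × B)) (WithLp 1 (A × B)) :=
  ⟨fun c x y => (WithLp.equiv 1 (A × B)).injective
    (smul_mul_assoc c (WithLp.equiv 1 (A × B) x) (WithLp.equiv 1 (A × B) y))⟩

instance : SMulCommClass ℂ (WithLp 1 (A × B)) (WithLp 1 (A × B)) :=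
  ⟨fun c x y => (WithLp.equiv 1 (A × B)).injective
    (mul_smul_comm c (WithLp.equiv 1 (A × B) x) (WithLp.equiv 1 (A × B) y)).symm⟩

end L1Prod

lemma IsDerivation.apply_mul {D : A →L[ℂ] (A →L[ℂ] ℂ)} (hD : IsDerivation D) (a b c : A) :
    D (a * b) c = D a (b * c) + D b (c * a) := by
  simp [hD a b]

-- Pushing the net forward to `A*` frees `IsApproxInner` from the universe of its index type.
lemma isApproxInner_iff_exists_filter (D : A →L[ℂ] (A →L[ℂ] ℂ)) :
    IsApproxInner D ↔ ∃ l : Filter (A →L[ℂ] ℂ), l.NeBot ∧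
      ∀ a, Tendsto (fun f => lAct a f - rAct f a) l (𝓝 (D a)) := by
  constructor
  · rintro ⟨ι, l, f, hl, hf⟩
    exact ⟨l.map f, hl.map f, fun a => tendsto_map'_iff.2 (hf a)⟩
  · rintro ⟨l, hl, hf⟩
    exact ⟨_, l, id, hl, hf⟩

section Derivations

variable {C : Type*} [NonUnitalNormedRing C] [NormedSpace ℂ C]
  [IsScalarTower ℂ C C] [SMulCommClass ℂ C C]

def derivPullback (φ : A →L[ℂ] C) (D : C →L[ℂ] (C →L[ℂ] ℂ)) : A →L[ℂ] (A →L[ℂ] ℂ) :=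
  ((ContinuousLinearMap.compL ℂ A C ℂ).flip φ).comp (D.comp φ)

@[simp]
lemma derivPullback_apply (φ : A →L[ℂ] C) (D : C →L[ℂ] (C →L[ℂ] ℂ)) (a b : A) :
    derivPullback φ D a b = D (φ a) (φ b) := rfl

variable {φ : A →L[ℂ] C} {D : C →L[ℂ] (C →L[ℂ] ℂ)}

lemma IsDerivation.derivPullback (hD : IsDerivation D) (hφ : ∀ a b, φ (a * b) = φ a * φ b) :
    IsDerivation (derivPullback φ D) := by
  intro a b
  ext c
  simp [hφ, hD.apply_mul]

lemma IsCyclicDeriv.derivPullback (hD : IsCyclicDeriv D) : IsCyclicDeriv (derivPullback φ D) :=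
  fun a b => hD (φ a) (φ b)

lemma IsDerivation.apply_eq_zero_of_dense_mul (hD : IsDerivation D)
    (hφ : ∀ a b, φ (a * b) = φ a * φ b) (hdense : Dense {z : A | ∃ x y : A, z = x * y})
    {c : C} (hl : ∀ a, φ a * c = 0) (hr : ∀ a, c * φ a = 0) (a : A) : D (φ a) c = 0 := by
  have hcont : Continuous fun x : A => D (φ x) c := by fun_prop
  refine congrFun (hcont.ext_on hdense continuous_const ?_) a
  rintro _ ⟨x, y, rfl⟩
  simp [hφ, hD.apply_mul, hl, hr]

end Derivations

@[ext]
lemma WithLp.prod_ext {p : ENNReal} {α β : Type*} [AddCommGroup α] [AddCommGroup β]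
    {x y : WithLp p (α × β)} (hfst : x.fst = y.fst) (hsnd : x.snd = y.snd) : x = y :=
  WithLp.ofLp_injective p (Prod.ext hfst hsnd)

section L1Sum

variable {B : Type v} [NonUnitalNormedRing B] [NormedSpace ℂ B]
  [IsScalarTower ℂ B B] [SMulCommClass ℂ B B]

lemma WithLp.fst_mul (x y : WithLp 1 (A × B)) : (x * y).fst = x.fst * y.fst := rfl

lemma WithLp.snd_mul (x y : WithLp 1 (A × B)) : (x * y).snd = x.snd * y.snd := rfl

def l1Inl : A →L[ℂ] WithLp 1 (A × B) :=
  (WithLp.prodContinuousLinearEquiv 1 ℂ A B).symm.toContinuousLinearMap.comp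
    (ContinuousLinearMap.inl ℂ A B)

def l1Inr : B →L[ℂ] WithLp 1 (A × B) :=
  (WithLp.prodContinuousLinearEquiv 1 ℂ A B).symm.toContinuousLinearMap.comp
    (ContinuousLinearMap.inr ℂ A B)

lemma l1Inl_apply (a : A) : (l1Inl a : WithLp 1 (A × B)) = WithLp.toLp 1 (a, 0) := rfl

lemma l1Inr_apply (b : B) : (l1Inr b : WithLp 1 (A × B)) = WithLp.toLp 1 (0, b) := rfl

lemma l1Inl_mul (a a' : A) : (l1Inl (a * a') : WithLp 1 (A × B)) = l1Inl a * l1Inl a' := by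
  ext <;> simp [l1Inl_apply, WithLp.fst_mul, WithLp.snd_mul]

lemma l1Inr_mul (b b' : B) : (l1Inr (b * b') : WithLp 1 (A × B)) = l1Inr b * l1Inr b' := by
  ext <;> simp [l1Inr_apply, WithLp.fst_mul, WithLp.snd_mul]

lemma l1Inl_mul_l1Inr (a : A) (b : B) : (l1Inl a * l1Inr b : WithLp 1 (A × B)) = 0 := by
  ext <;> simp [l1Inl_apply, l1Inr_apply, WithLp.fst_mul, WithLp.snd_mul]

lemma l1Inr_mul_l1Inl (b : B) (a : A) : (l1Inr b * l1Inl a : WithLp 1 (A × B)) = 0 := by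
  ext <;> simp [l1Inl_apply, l1Inr_apply, WithLp.fst_mul, WithLp.snd_mul]

lemma l1Inl_fst_add_l1Inr_snd (z : WithLp 1 (A × B)) : l1Inl z.fst + l1Inr z.snd = z := by
  ext <;> simp [l1Inl_apply, l1Inr_apply]

def l1Dual : (A →L[ℂ] ℂ) × (B →L[ℂ] ℂ) →L[ℂ] (WithLp 1 (A × B) →L[ℂ] ℂ) :=
  ((ContinuousLinearMap.compL ℂ _ A ℂ).flip (WithLp.fstL 1 ℂ A B)).coprod
    ((ContinuousLinearMap.compL ℂ _ B ℂ).flip (WithLp.sndL 1 ℂ A B))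

@[simp]
lemma l1Dual_apply (f : A →L[ℂ] ℂ) (g : B →L[ℂ] ℂ) (z : WithLp 1 (A × B)) :
    l1Dual (f, g) z = f z.fst + g z.snd := rfl

lemma lAct_sub_rAct_l1Dual (z : WithLp 1 (A × B)) (f : A →L[ℂ] ℂ) (g : B →L[ℂ] ℂ) :
    lAct z (l1Dual (f, g)) - rAct (l1Dual (f, g)) z
      = l1Dual (lAct z.fst f - rAct f z.fst, lAct z.snd g - rAct g z.snd) := by
  ext c
  simp only [FunLike.coe_sub, Pi.sub_apply, lAct_apply, rAct_apply, l1Dual_apply,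
    WithLp.fst_mul, WithLp.snd_mul]
  ring

lemma apply_eq_l1Dual_derivPullback (D : WithLp 1 (A × B) →L[ℂ] (WithLp 1 (A × B) →L[ℂ] ℂ))
    (hlr : ∀ a b, D (l1Inl a) (l1Inr b) = 0) (hrl : ∀ b a, D (l1Inr b) (l1Inl a) = 0)
    (z : WithLp 1 (A × B)) :
    D z = l1Dual (derivPullback l1Inl D z.fst, derivPullback l1Inr D z.snd) := by
  ext c
  conv_lhs => rw [← l1Inl_fst_add_l1Inr_snd z, ← l1Inl_fst_add_l1Inr_snd c]
  simp [hlr, hrl]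

lemma isApproxInner_of_apply_eq_l1Dual {D : WithLp 1 (A × B) →L[ℂ] (WithLp 1 (A × B) →L[ℂ] ℂ)}
    {DA : A →L[ℂ] (A →L[ℂ] ℂ)} {DB : B →L[ℂ] (B →L[ℂ] ℂ)}
    (hA : IsApproxInner DA) (hB : IsApproxInner DB) (hD : ∀ z, D z = l1Dual (DA z.fst, DB z.snd)) :
    IsApproxInner D := by
  obtain ⟨lA, _, hfA⟩ := (isApproxInner_iff_exists_filter DA).1 hA
  obtain ⟨lB, _, hfB⟩ := (isApproxInner_iff_exists_filter DB).1 hB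
  refine (isApproxInner_iff_exists_filter D).2 ⟨(lA ×ˢ lB).map l1Dual, inferInstance, fun z => ?_⟩
  rw [tendsto_map'_iff, hD]
  have hpair := ((hfA z.fst).comp tendsto_fst).prodMk_nhds ((hfB z.snd).comp tendsto_snd)
  refine ((l1Dual.continuous.tendsto _).comp hpair).congr fun p => ?_
  exact (lAct_sub_rAct_l1Dual z p.1 p.2).symm

end L1Sum

theorem l1prod_approxCyclicAmenable_general
    {A : Type u} [NonUnitalNormedRing A] [NormedSpace ℂ A]
    [IsScalarTower ℂ A A] [SMulCommClass ℂ A A]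
    {B : Type v} [NonUnitalNormedRing B] [NormedSpace ℂ B]
    [IsScalarTower ℂ B B] [SMulCommClass ℂ B B]
    (hdense : Dense {z : A | ∃ x y : A, z = x * y})
    (hA : ApproxCyclicAmenable A) (hB : ApproxCyclicAmenable B) :
    ApproxCyclicAmenable (WithLp 1 (A × B)) := by
  intro D hD hcyc
  have hlr (a : A) (b : B) : D (l1Inl a) (l1Inr b) = 0 :=
    hD.apply_eq_zero_of_dense_mul l1Inl_mul hdense (l1Inl_mul_l1Inr · b) (l1Inr_mul_l1Inl b ·) a
  have hrl (b : B) (a : A) : D (l1Inr b) (l1Inl a) = 0 := by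
    simpa [hlr] using hcyc (l1Inl a) (l1Inr b)
  exact isApproxInner_of_apply_eq_l1Dual
    (hA _ (hD.derivPullback l1Inl_mul) hcyc.derivPullback)
    (hB _ (hD.derivPullback l1Inr_mul) hcyc.derivPullback)
    (apply_eq_l1Dual_derivPullback D hlr hrl)

/-- Let `A`, `B` be Banach algebras, with `A` commutative and `A²` dense in
`A`.  If `A` and `B` are approximately cyclic amenable, then so is the `ℓ¹`-direct sum
`A ⊕ B`. -/
theorem l1prod_approxCyclicAmenable
    {A : Type u} [NonUnitalNormedRing A] [NormedSpace ℂ A]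
    [IsScalarTower ℂ A A] [SMulCommClass ℂ A A] [CompleteSpace A]
    {B : Type v} [NonUnitalNormedRing B] [NormedSpace ℂ B]
    [IsScalarTower ℂ B B] [SMulCommClass ℂ B B] [CompleteSpace B]
    (hcomm : ∀ a b : A, a * b = b * a)
    (hdense : Dense {z : A | ∃ x y : A, z = x * y})
    (hA : ApproxCyclicAmenable A) (hB : ApproxCyclicAmenable B) :
    ApproxCyclicAmenable (WithLp 1 (A × B)) :=
  l1prod_approxCyclicAmenable_general hdense hA hB
end
end

section
/- Let A and B be Banach algebras. If the ℓ¹-direct sum A ⊕ B (with coordinatewise operations and norm ‖(a,b)‖ = ‖a‖ + ‖b‖) is approximately cyclic amenable, then both A and B are approximately cyclic amenable. -/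
open Filter Topology

noncomputable section

universe u v

variable {A : Type u} [NonUnitalNormedRing A] [NormedSpace ℂ A]
  [IsScalarTower ℂ A A] [SMulCommClass ℂ A A]

set_option linter.unusedSectionVars false

/-!
A cyclic derivation `D` of `A` pulls back along the coordinate projection `π : A ⊕ B → A`,
which is an algebra homomorphism, to the cyclic derivation `(x, z) ↦ D (π x) (π z)` of
`A ⊕ B`. If nets `fᵢ` approximate that pullback by inner derivations, restricting them along
the inclusion `ι : A → A ⊕ B` gives inner derivations of `A` approximating `D`, because
`π ∘ ι = id` and `ι` is multiplicative. The same argument applies to `B`.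
-/

section Retract

variable {C : Type*} [NonUnitalNormedRing C] [NormedSpace ℂ C]
  {P : Type*} [NonUnitalNormedRing P] [NormedSpace ℂ P]

def pullbackDeriv (π : P →L[ℂ] C) (D : C →L[ℂ] (C →L[ℂ] ℂ)) : P →L[ℂ] (P →L[ℂ] ℂ) :=
  ((ContinuousLinearMap.compL ℂ P C ℂ).flip π).comp (D.comp π)

@[simp]
lemma pullbackDeriv_apply (π : P →L[ℂ] C) (D : C →L[ℂ] (C →L[ℂ] ℂ)) (x z : P) :
    pullbackDeriv π D x z = D (π x) (π z) :=
  rfl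

variable [IsScalarTower ℂ C C] [SMulCommClass ℂ C C] [IsScalarTower ℂ P P] [SMulCommClass ℂ P P]

lemma isDerivation_iff_forall_apply {D : C →L[ℂ] (C →L[ℂ] ℂ)} :
    IsDerivation D ↔ ∀ a b c : C, D (a * b) c = D a (b * c) + D b (c * a) := by
  refine forall₂_congr fun a b => ?_
  rw [ContinuousLinearMap.ext_iff]
  rfl

lemma IsDerivation.pullback {π : P →L[ℂ] C} (hπ : ∀ x y, π (x * y) = π x * π y)
    {D : C →L[ℂ] (C →L[ℂ] ℂ)} (hD : IsDerivation D) : IsDerivation (pullbackDeriv π D) := by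
  rw [isDerivation_iff_forall_apply] at hD ⊢
  intro x y z
  simp only [pullbackDeriv_apply, hπ, hD]

lemma IsCyclicDeriv.pullback (π : P →L[ℂ] C) {D : C →L[ℂ] (C →L[ℂ] ℂ)}
    (hD : IsCyclicDeriv D) : IsCyclicDeriv (pullbackDeriv π D) :=
  fun x y => hD (π x) (π y)

lemma lAct_sub_rAct_comp {ι : C →L[ℂ] P} (hι : ∀ a b, ι (a * b) = ι a * ι b)
    (a : C) (f : P →L[ℂ] ℂ) :
    lAct a (f.comp ι) - rAct (f.comp ι) a = (lAct (ι a) f - rAct f (ι a)).comp ι := by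
  ext c
  simp [lAct, rAct, hι]

lemma IsApproxInner.of_pullback {ι : C →L[ℂ] P} {π : P →L[ℂ] C}
    (hι : ∀ a b, ι (a * b) = ι a * ι b) (hπι : ∀ a, π (ι a) = a)
    {D : C →L[ℂ] (C →L[ℂ] ℂ)} (hD : IsApproxInner (pullbackDeriv π D)) :
    IsApproxInner D := by
  obtain ⟨I, l, f, hl, hf⟩ := hD
  let restrict : (P →L[ℂ] ℂ) →L[ℂ] (C →L[ℂ] ℂ) := (ContinuousLinearMap.compL ℂ C P ℂ).flip ι
  -- Reindex by the restricted functionals themselves, so that the index type lives in `C`'s universe.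
  refine ⟨C →L[ℂ] ℂ, l.map (restrict ∘ f), id, hl.map _, fun a => ?_⟩
  have hDa : D a = restrict (pullbackDeriv π D (ι a)) := by
    ext c
    simp [restrict, hπι]
  rw [tendsto_map'_iff, hDa]
  refine ((restrict.continuous.tendsto _).comp (hf (ι a))).congr fun i => ?_
  exact (lAct_sub_rAct_comp hι a (f i)).symm

lemma ApproxCyclicAmenable.of_retract (ι : C →L[ℂ] P) (π : P →L[ℂ] C)
    (hι : ∀ a b, ι (a * b) = ι a * ι b) (hπ : ∀ x y, π (x * y) = π x * π y)
    (hπι : ∀ a, π (ι a) = a) (h : ApproxCyclicAmenable P) : ApproxCyclicAmenable C :=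
  fun _ hder hcyc => (h _ (hder.pullback hπ) (hcyc.pullback π)).of_pullback hι hπι

end Retract

lemma l1prod_toLp_mul {E F : Type*} [NonUnitalNormedRing E] [NonUnitalNormedRing F]
    (x y : E × F) : WithLp.toLp 1 (x * y) = WithLp.toLp 1 x * WithLp.toLp 1 y :=
  rfl

theorem approxCyclicAmenable_of_l1prod_general
    {A : Type u} [NonUnitalNormedRing A] [NormedSpace ℂ A]
    [IsScalarTower ℂ A A] [SMulCommClass ℂ A A]
    {B : Type v} [NonUnitalNormedRing B] [NormedSpace ℂ B]
    [IsScalarTower ℂ B B] [SMulCommClass ℂ B B]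
    (h : ApproxCyclicAmenable (WithLp 1 (A × B))) :
    ApproxCyclicAmenable A ∧ ApproxCyclicAmenable B := by
  let toLp : (A × B) →L[ℂ] WithLp 1 (A × B) :=
    (WithLp.prodContinuousLinearEquiv 1 ℂ A B).symm.toContinuousLinearMap
  exact ⟨.of_retract (toLp.comp (.inl ℂ A B)) (WithLp.fstL 1 ℂ A B)
      (fun a b => by simp [toLp, ← l1prod_toLp_mul]) (fun _ _ => rfl) (fun _ => rfl) h,
    .of_retract (toLp.comp (.inr ℂ A B)) (WithLp.sndL 1 ℂ A B)
      (fun a b => by simp [toLp, ← l1prod_toLp_mul]) (fun _ _ => rfl) (fun _ => rfl) h⟩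

/-- If the `ℓ¹`-direct sum `A ⊕ B` of two Banach algebras is approximately
cyclic amenable, then so are both `A` and `B`. -/
theorem approxCyclicAmenable_of_l1prod
    {A : Type u} [NonUnitalNormedRing A] [NormedSpace ℂ A]
    [IsScalarTower ℂ A A] [SMulCommClass ℂ A A] [CompleteSpace A]
    {B : Type v} [NonUnitalNormedRing B] [NormedSpace ℂ B]
    [IsScalarTower ℂ B B] [SMulCommClass ℂ B B] [CompleteSpace B]
    (h : ApproxCyclicAmenable (WithLp 1 (A × B))) :
    ApproxCyclicAmenable A ∧ ApproxCyclicAmenable B :=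
  approxCyclicAmenable_of_l1prod_general h
end
end

section
/- The two-dimensional Banach algebra A = ℂ ⊕ ℂ (ℓ¹-norm) equipped with the zero product (ab = 0 for all a,b ∈ A) is not approximately cyclic amenable. -/
open Filter Topology

noncomputable section

universe u v

variable {A : Type u} [NonUnitalNormedRing A] [NormedSpace ℂ A]
  [IsScalarTower ℂ A A] [SMulCommClass ℂ A A]

/-- A normed space `V` regarded as a Banach algebra with the zero product. -/
def ZeroMulAlg (V : Type u) : Type u := V

namespace ZeroMulAlg

variable (V : Type u) [NormedAddCommGroup V] [NormedSpace ℂ V]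

instance : NormedAddCommGroup (ZeroMulAlg V) := inferInstanceAs (NormedAddCommGroup V)
instance : NormedSpace ℂ (ZeroMulAlg V) := inferInstanceAs (NormedSpace ℂ V)

/-- The zero product. -/
instance : Mul (ZeroMulAlg V) := ⟨fun _ _ => 0⟩

@[simp] lemma mul_def (x y : ZeroMulAlg V) : x * y = 0 := rfl

instance : NonUnitalRing (ZeroMulAlg V) where
  __ := (inferInstance : AddCommGroup (ZeroMulAlg V))
  mul := (· * ·)
  left_distrib x y z := by simp
  right_distrib x y z := by simp
  zero_mul x := rfl
  mul_zero x := rfl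
  mul_assoc x y z := by simp

instance : NonUnitalNormedRing (ZeroMulAlg V) where
  __ := (inferInstance : NonUnitalRing (ZeroMulAlg V))
  __ := (inferInstance : NormedAddCommGroup (ZeroMulAlg V))
  norm_mul_le x y := by
    rw [mul_def]
    have : ‖(0 : ZeroMulAlg V)‖ = 0 := norm_zero
    exact this.le.trans (mul_nonneg (norm_nonneg x) (norm_nonneg y))

instance : IsScalarTower ℂ (ZeroMulAlg V) (ZeroMulAlg V) :=
  ⟨fun c x y => by show (c • x) * y = c • (x * y); simp⟩

instance : SMulCommClass ℂ (ZeroMulAlg V) (ZeroMulAlg V) :=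
  ⟨fun c x y => by show c • (x * y) = x * (c • y); simp⟩

end ZeroMulAlg

/-!
In an algebra with zero product both module actions on the dual vanish, so every bounded linear
map `A → A*` is a derivation, while every approximately inner one is a limit of zero maps, hence
zero. A cyclic derivation is just a skew-symmetric bounded bilinear form, so any nonzero one, such
as the determinant form `(a, b) ↦ a₁ b₂ - a₂ b₁` on `ℂ²`, is a cyclic derivation that is not
approximately inner.
-/

section WedgeForm

variable {𝕜 E : Type*} [NontriviallyNormedField 𝕜] [NormedAddCommGroup E] [NormedSpace 𝕜 E]

def wedgeForm (φ ψ : E →L[𝕜] 𝕜) : E →L[𝕜] E →L[𝕜] 𝕜 :=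
  φ.smulRight ψ - ψ.smulRight φ

@[simp]
lemma wedgeForm_apply (φ ψ : E →L[𝕜] 𝕜) (a b : E) :
    wedgeForm φ ψ a b = φ a * ψ b - ψ a * φ b := by
  simp [wedgeForm, smul_eq_mul]

lemma wedgeForm_apply_add_apply_swap (φ ψ : E →L[𝕜] 𝕜) (a b : E) :
    wedgeForm φ ψ a b + wedgeForm φ ψ b a = 0 := by
  simp only [wedgeForm_apply]
  ring

end WedgeForm

namespace ZeroMulAlg

variable {V : Type u} [NormedAddCommGroup V] [NormedSpace ℂ V]

@[simp]
lemma lAct_eq_zero (a : ZeroMulAlg V) (f : ZeroMulAlg V →L[ℂ] ℂ) : lAct a f = 0 := by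
  ext b
  simp [lAct]

@[simp]
lemma rAct_eq_zero (a : ZeroMulAlg V) (f : ZeroMulAlg V →L[ℂ] ℂ) : rAct f a = 0 := by
  ext b
  simp [rAct]

lemma isDerivation (D : ZeroMulAlg V →L[ℂ] (ZeroMulAlg V →L[ℂ] ℂ)) : IsDerivation D := by
  intro a b
  simp

lemma eq_zero_of_isApproxInner {D : ZeroMulAlg V →L[ℂ] (ZeroMulAlg V →L[ℂ] ℂ)}
    (hD : IsApproxInner D) : D = 0 := by
  obtain ⟨ι, l, f, hl, hf⟩ := hD
  ext1 a
  refine tendsto_nhds_unique (hf a) ?_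
  simp

lemma not_approxCyclicAmenable_of_isCyclicDeriv
    {D : ZeroMulAlg V →L[ℂ] (ZeroMulAlg V →L[ℂ] ℂ)} (hcyc : IsCyclicDeriv D) (hD : D ≠ 0) :
    ¬ ApproxCyclicAmenable (ZeroMulAlg V) :=
  fun h => hD (eq_zero_of_isApproxInner (h D (isDerivation D) hcyc))

lemma not_approxCyclicAmenable_of_wedgeForm_ne_zero {φ ψ : ZeroMulAlg V →L[ℂ] ℂ}
    (h : wedgeForm φ ψ ≠ 0) : ¬ ApproxCyclicAmenable (ZeroMulAlg V) :=
  not_approxCyclicAmenable_of_isCyclicDeriv (wedgeForm_apply_add_apply_swap φ ψ) h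

end ZeroMulAlg

/-- The two-dimensional Banach algebra `ℂ ⊕ ℂ` (with the `ℓ¹`-norm) with
the zero product is not approximately cyclic amenable. -/
theorem zeroMulAlg_complex_sq_not_approxCyclicAmenable :
    ¬ ApproxCyclicAmenable (ZeroMulAlg (WithLp 1 (ℂ × ℂ))) := by
  refine ZeroMulAlg.not_approxCyclicAmenable_of_wedgeForm_ne_zero
    (φ := WithLp.fstL 1 ℂ ℂ ℂ) (ψ := WithLp.sndL 1 ℂ ℂ ℂ) fun h => ?_
  -- `simp` does not see through the instances of the type synonym `ZeroMulAlg`; defeq does.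
  have hdet : (0 : ℂ) = 1 * 1 - 0 * 0 :=
    (congr($h (WithLp.toLp 1 (1, 0)) (WithLp.toLp 1 (0, 1)))).symm.trans (wedgeForm_apply _ _ _ _)
  norm_num at hdet
end
end
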